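/- Assume in addition d ≥ 2 and α = d − 1. Then for every ε ∈ (0, 1): ∫_𝒳 g(z)^{−(d−1)}·1{g(z) > ε} dz ≤ (1/c̲)·(1 + D·(d−1)·ln(1/ε)), where the integral is with respect to Lebesgue measure on ℝ^d. -/

import Mathlib

open MeasureTheory Set
open scoped ENNReal

/-! On `𝒳` the density is at least `c̲`, so Lebesgue measure there is at most `μ / c̲` and the
integral is at most `1/c̲` times the `μ`-expectation of `f = g^{-α} 1{g > ε} ≤ ε^{-α}`. By the
layer-cake formula this expectation is `∫_0^∞ μ{f > t} dt`: the tail is at most `1` for `t ≤ 1`,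
vanishes for `t > ε^{-α}`, and in between the margin condition at `δ = t^{-1/α}` bounds it by
`D / t`, which integrates to `D α log(1/ε)`. -/

theorem mul_setLIntegral_le_setLIntegral_withDensity {α : Type*} [MeasurableSpace α]
    {ν : Measure α} [SFinite ν] (s : Set α) {p f : α → ℝ≥0∞} (hp : Measurable p)
    (hf : Measurable f) {c : ℝ≥0∞} (hpc : ∀ᵐ x ∂ν, x ∈ s → c ≤ p x) :
    c * ∫⁻ x in s, f x ∂ν ≤ ∫⁻ x in s, f x ∂(ν.withDensity p) := by
  rw [restrict_withDensity' s, lintegral_withDensity_eq_lintegral_mul _ hp hf,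
    ← lintegral_const_mul _ hf]
  refine lintegral_mono_ae ?_
  filter_upwards [(ae_restrict_iff (measurableSet_le measurable_const hp)).2 hpc] with x hx
  exact mul_le_mul_left hx _

theorem setLIntegral_Ioc_one_ofReal_div {D : ℝ} (hD : 0 ≤ D) {M : ℝ} (hM : 1 ≤ M) :
    ∫⁻ t in Ioc 1 M, ENNReal.ofReal (D / t) = ENNReal.ofReal (D * Real.log M) := by
  have hinv : IntervalIntegrable (fun t : ℝ ↦ t⁻¹) volume 1 M :=
    intervalIntegral.intervalIntegrable_inv (fun t ht ↦ by
      rw [uIcc_of_le hM] at ht; linarith [ht.1]) continuousOn_id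
  simp_rw [div_eq_mul_inv]
  rw [← ofReal_integral_eq_lintegral_ofReal (hinv.1.const_mul D),
    ← intervalIntegral.integral_of_le hM, intervalIntegral.integral_const_mul,
    integral_inv_of_pos one_pos (one_pos.trans_le hM), div_one]
  filter_upwards [ae_restrict_mem measurableSet_Ioc] with t ht
  exact mul_nonneg hD (inv_nonneg.2 (zero_le_one.trans ht.1.le))

section Indicator

variable {Ω : Type*} {g : Ω → ℝ} {α ε : ℝ}

theorem indicator_rpow_neg_nonneg (hε : 0 ≤ ε) :
    0 ≤ {x | ε < g x}.indicator fun x ↦ g x ^ (-α) :=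
  fun x ↦ indicator_nonneg (fun _ hx ↦ Real.rpow_nonneg (hε.trans hx.le) _) x

theorem indicator_rpow_neg_le (hα : 0 ≤ α) (hε : 0 < ε) (x : Ω) :
    {x | ε < g x}.indicator (fun x ↦ g x ^ (-α)) x ≤ ε ^ (-α) := by
  by_cases hgx : x ∈ {x | ε < g x}
  · rw [indicator_of_mem hgx]
    exact Real.rpow_le_rpow_of_nonpos hε hgx.le (neg_nonpos.2 hα)
  · rw [indicator_of_notMem hgx]
    exact Real.rpow_nonneg hε.le _

end Indicator

section Margin

variable {Ω : Type*} [MeasurableSpace Ω] {μ : Measure Ω}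

theorem lintegral_ofReal_le_one_add_log_of_meas_lt_le [IsProbabilityMeasure μ] {f : Ω → ℝ}
    (hf : Measurable f) (hf0 : 0 ≤ f) {D M : ℝ} (hD : 0 ≤ D) (hM : 1 ≤ M)
    (hfM : ∀ x, f x ≤ M) (htail : ∀ t, 1 < t → μ {x | t < f x} ≤ ENNReal.ofReal (D / t)) :
    ∫⁻ x, ENNReal.ofReal (f x) ∂μ ≤ 1 + ENNReal.ofReal (D * Real.log M) := by
  have hbulk : ∫⁻ t in Ioc 0 1, μ {x | t < f x} ≤ 1 :=
    calc ∫⁻ t in Ioc 0 1, μ {x | t < f x} ≤ ∫⁻ _ in Ioc (0 : ℝ) 1, 1 :=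
          lintegral_mono fun _ ↦ prob_le_one
      _ = 1 := by simp
  have hmid : ∫⁻ t in Ioc 1 M, μ {x | t < f x} ≤ ENNReal.ofReal (D * Real.log M) :=
    setLIntegral_Ioc_one_ofReal_div hD hM ▸
      setLIntegral_mono (by fun_prop) fun t ht ↦ htail t ht.1
  have hbeyond : ∫⁻ t in Ioi M, μ {x | t < f x} = 0 := by
    rw [setLIntegral_congr_fun (g := fun _ ↦ 0) measurableSet_Ioi fun t ht ↦ ?_, lintegral_zero]
    refine measure_mono_null (fun x hx ↦ ?_) measure_empty
    exact (hfM x).not_gt (mem_Ioi.1 ht |>.trans hx)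
  rw [lintegral_eq_lintegral_meas_lt μ (.of_forall hf0) hf.aemeasurable,
    ← Ioc_union_Ioi_eq_Ioi zero_le_one, lintegral_union measurableSet_Ioi Ioc_disjoint_Ioi_same,
    ← Ioc_union_Ioi_eq_Ioi hM, lintegral_union measurableSet_Ioi Ioc_disjoint_Ioi_same,
    hbeyond, add_zero]
  exact add_le_add hbulk hmid

variable {g : Ω → ℝ} {α D ε : ℝ}

theorem meas_lt_indicator_rpow_neg_le_div (hα : 0 < α) (hε : 0 < ε)
    (hmargin : ∀ δ : ℝ, 0 < δ → μ {x | 0 < g x ∧ g x ≤ δ} ≤ ENNReal.ofReal (D * δ ^ α))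
    {t : ℝ} (ht : 0 < t) :
    μ {x | t < {x | ε < g x}.indicator (fun x ↦ g x ^ (-α)) x} ≤ ENNReal.ofReal (D / t) := by
  have hsub : {x | t < {x | ε < g x}.indicator (fun x ↦ g x ^ (-α)) x} ⊆
      {x | 0 < g x ∧ g x ≤ t ^ (-α)⁻¹} := by
    intro x (hx : t < _)
    by_cases hgx : x ∈ {x | ε < g x}
    · have hg0 : 0 < g x := hε.trans hgx
      rw [indicator_of_mem hgx] at hx
      exact ⟨hg0, ((Real.lt_rpow_inv_iff_of_neg hg0 ht (neg_neg_of_pos hα)).2 hx).le⟩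
    · rw [indicator_of_notMem hgx] at hx
      exact absurd hx ht.not_gt
  calc _ ≤ μ {x | 0 < g x ∧ g x ≤ t ^ (-α)⁻¹} := measure_mono hsub
    _ ≤ ENNReal.ofReal (D * (t ^ (-α)⁻¹) ^ α) := hmargin _ (Real.rpow_pos_of_pos ht _)
    _ = ENNReal.ofReal (D / t) := by
      rw [← Real.rpow_mul ht.le, inv_neg, neg_mul, inv_mul_cancel₀ hα.ne', Real.rpow_neg_one,
        div_eq_mul_inv]

theorem lintegral_indicator_rpow_neg_le_of_margin [IsProbabilityMeasure μ] (hg : Measurable g)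
    (hα : 0 < α) (hD : 0 ≤ D) (hε0 : 0 < ε) (hε1 : ε ≤ 1)
    (hmargin : ∀ δ : ℝ, 0 < δ → μ {x | 0 < g x ∧ g x ≤ δ} ≤ ENNReal.ofReal (D * δ ^ α)) :
    ∫⁻ x, ENNReal.ofReal ({x | ε < g x}.indicator (fun x ↦ g x ^ (-α)) x) ∂μ ≤
      1 + ENNReal.ofReal (D * α * Real.log (1 / ε)) := by
  have hlog : D * α * Real.log (1 / ε) = D * Real.log (ε ^ (-α)) := by
    rw [Real.log_rpow hε0, one_div, Real.log_inv]; ring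
  rw [hlog]
  refine lintegral_ofReal_le_one_add_log_of_meas_lt_le
    ((hg.pow_const _).indicator (measurableSet_lt measurable_const hg))
    (indicator_rpow_neg_nonneg hε0.le) hD
    (Real.one_le_rpow_of_pos_of_le_one_of_nonpos hε0 hε1 (neg_nonpos.2 hα.le))
    (indicator_rpow_neg_le hα.le hε0)
    (fun t ht ↦ meas_lt_indicator_rpow_neg_le_div hα hε0 hmargin (one_pos.trans ht))

end Margin

theorem stmt_12_general (d : ℕ) (c D α : ℝ) (hc : 0 < c) (hD : 0 < D)
    (hα0 : 0 < α) (hdα : α = (d : ℝ) - 1)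
    (𝒳 : Set (EuclideanSpace ℝ (Fin d)))
    (μ : Measure (EuclideanSpace ℝ (Fin d))) [IsProbabilityMeasure μ]
    (p : EuclideanSpace ℝ (Fin d) → ℝ) (hp_meas : Measurable p)
    (hμp : μ = volume.withDensity fun x => ENNReal.ofReal (p x))
    (hpc : ∀ᵐ x ∂volume, x ∈ 𝒳 → c ≤ p x)
    (g : EuclideanSpace ℝ (Fin d) → ℝ) (hg_meas : Measurable g)
    (hmargin : ∀ δ : ℝ, 0 < δ → μ {x | 0 < g x ∧ g x ≤ δ} ≤ ENNReal.ofReal (D * δ ^ α))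
    (ε : ℝ) (hε0 : 0 < ε) (hε1 : ε < 1) :
    ∫ z in 𝒳, Set.indicator {z | ε < g z} (fun z => g z ^ (-((d : ℝ) - 1))) z ≤
      1 / c * (1 + D * ((d : ℝ) - 1) * Real.log (1 / ε)) := by
  rw [← hdα]
  set f := {z | ε < g z}.indicator fun z ↦ g z ^ (-α)
  have hf : Measurable f :=
    (hg_meas.pow_const _).indicator (measurableSet_lt measurable_const hg_meas)
  have hdensity : ENNReal.ofReal c * ∫⁻ z in 𝒳, ENNReal.ofReal (f z) ≤
      ∫⁻ z in 𝒳, ENNReal.ofReal (f z) ∂μ :=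
    hμp ▸ mul_setLIntegral_le_setLIntegral_withDensity 𝒳 hp_meas.ennreal_ofReal hf.ennreal_ofReal
      (hpc.mono fun z hz hz𝒳 ↦ ENNReal.ofReal_le_ofReal (hz hz𝒳))
  have hlog : 0 ≤ Real.log (1 / ε) := Real.log_nonneg (one_le_one_div hε0 hε1.le)
  have hmass : ∫⁻ z in 𝒳, ENNReal.ofReal (f z) ∂μ ≤
      ENNReal.ofReal (1 + D * α * Real.log (1 / ε)) := by
    rw [ENNReal.ofReal_add zero_le_one (by positivity), ENNReal.ofReal_one]
    exact (setLIntegral_le_lintegral 𝒳 _).trans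
      (lintegral_indicator_rpow_neg_le_of_margin hg_meas hα0 hD.le hε0 hε1.le hmargin)
  rw [integral_eq_lintegral_of_nonneg_ae (.of_forall (indicator_rpow_neg_nonneg hε0.le))
    hf.aestronglyMeasurable]
  refine ENNReal.toReal_le_of_le_ofReal (by positivity) ?_
  rw [one_div_mul_eq_div, ENNReal.ofReal_div_of_pos hc, ENNReal.le_div_iff_mul_le
    (.inl (ENNReal.ofReal_pos.2 hc).ne') (.inl ENNReal.ofReal_ne_top), mul_comm]
  exact hdensity.trans hmass

/-- Case `α = d - 1` of Lemma 8. Under the density lower bound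
`p ≥ c̲` a.e. on `𝒳` (where `μ = p · Leb` is a probability measure with `μ(𝒳) = 1`)
and the margin condition `μ({0 < g ≤ δ}) ≤ D δ^α`, for every `ε ∈ (0,1)`:
`∫_𝒳 g(z)^{-(d-1)} 1{g(z) > ε} dz ≤ (1/c̲)(1 + D(d-1) ln(1/ε))`. -/
theorem stmt_12 (d : ℕ) (hd : 2 ≤ d) (c D α : ℝ) (hc : 0 < c) (hD : 0 < D)
    (hα0 : 0 < α) (hαd : α ≤ (d : ℝ)) (hdα : α = (d : ℝ) - 1)
    (𝒳 : Set (EuclideanSpace ℝ (Fin d))) (h𝒳 : MeasurableSet 𝒳)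
    (μ : Measure (EuclideanSpace ℝ (Fin d))) [IsProbabilityMeasure μ]
    (hμ𝒳 : μ 𝒳 = 1)
    (p : EuclideanSpace ℝ (Fin d) → ℝ) (hp_meas : Measurable p) (hp0 : ∀ x, 0 ≤ p x)
    (hμp : μ = volume.withDensity fun x => ENNReal.ofReal (p x))
    (hpc : ∀ᵐ x ∂volume, x ∈ 𝒳 → c ≤ p x)
    (g : EuclideanSpace ℝ (Fin d) → ℝ) (hg_meas : Measurable g) (hg0 : ∀ x, 0 ≤ g x)
    (hmargin : ∀ δ : ℝ, 0 < δ → μ {x | 0 < g x ∧ g x ≤ δ} ≤ ENNReal.ofReal (D * δ ^ α))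
    (ε : ℝ) (hε0 : 0 < ε) (hε1 : ε < 1) :
    ∫ z in 𝒳, Set.indicator {z | ε < g z} (fun z => g z ^ (-((d : ℝ) - 1))) z ≤
      1 / c * (1 + D * ((d : ℝ) - 1) * Real.log (1 / ε)) :=
  stmt_12_general d c D α hc hD hα0 hdα 𝒳 μ p hp_meas hμp hpc g hg_meas hmargin ε hε0 hε1
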